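/- arXiv:1501.04664 — 8 statements merged into one kernel-verified Lean document; each statement's English description precedes it below -/
import Mathlib

section
/- Let A and M be abelian groups and let f₊ : A×A×A → M and g₊ : A×A → M be functions satisfying, for all a, b, c, d ∈ A: (i) f₊(b,c,d) − f₊(a+b,c,d) + f₊(a,b+c,d) − f₊(a,b,c+d) + f₊(a,b,c) = 0; (ii) f₊(a,b,c) − f₊(a,c,b) + f₊(c,a,b) = g₊(b,c) − g₊(a+b,c) + g₊(a,c); (iii) f₊(a,b,c) − f₊(b,a,c) + f₊(b,c,a) = −g₊(a,c) + g₊(a,b+c) − g₊(a,b). Then the trace q : A → M defined by q(a) := g₊(a,a) is a quadratic map: q(n·a) = n²·q(a) for all n ∈ ℤ and a ∈ A, and the associated symmetric function Δq(a,b) := q(a+b) − q(a) − q(b) is additive in each variable. -/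
/-!
Expanding `g (x + y) (x + y)` first in the second variable by (iii) and then in the first
variable by (ii), the associator terms left over are exactly one instance of the pentagon
equation (i), so the polarization of `q` is `g x y + g y x`. By (ii) and (iii) once more, this
symmetrization of `g` is additive, since the associator terms of the two equations coincide.
A function whose polarization is biadditive and equals `2 • q` on the diagonal is homogeneous of
degree two, by induction on the multiplier.
-/

open QuadraticMap

section Polar

variable {A M : Type*} [AddCommGroup A] [AddCommGroup M]

theorem polar_add_right_of_polar_add_left {q : A → M}
    (hadd : ∀ x x' y, polar q (x + x') y = polar q x y + polar q x' y) (x y y' : A) :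
    polar q x (y + y') = polar q x y + polar q x y' := by
  simpa only [polar_comm q x] using hadd y y' x

theorem map_zsmul_of_polar {q : A → M}
    (hadd : ∀ x x' y, polar q (x + x') y = polar q x y + polar q x' y)
    (hself : ∀ x, polar q x x = 2 • q x) (n : ℤ) (x : A) :
    q (n • x) = n ^ 2 • q x := by
  let polarX : A →+ M := AddMonoidHom.mk' (fun z ↦ polar q z x) (hadd · · x)
  have hzero : q 0 = 0 := by
    simpa [polarX, polar] using polarX.map_zero
  have hstep : ∀ m : ℤ, q ((m + 1) • x) = q (m • x) + (2 * m + 1) • q x := by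
    intro m
    have hpolar : polar q (m • x) x = m • polar q x x := map_zsmul polarX m x
    rw [add_smul, one_smul, QuadraticMap.map_add q, hpolar, hself]
    module
  induction n using Int.induction_on with
  | zero => simpa using hzero
  | succ i ih =>
    rw [hstep, ih]
    module
  | pred i ih =>
    have h := hstep (-(i : ℤ) - 1)
    rw [sub_add_cancel, ih] at h
    linear_combination (norm := module) -h

end Polar

section Cocycle

variable {A M : Type*} [AddCommGroup A] [AddCommGroup M] {f : A → A → A → M} {g : A → A → M}

theorem add_swap_add_left
    (h2 : ∀ a b c : A, f a b c - f a c b + f c a b = g b c - g (a + b) c + g a c)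
    (h3 : ∀ a b c : A, f a b c - f b a c + f b c a = -g a c + g a (b + c) - g a b)
    (x x' y : A) :
    g (x + x') y + g y (x + x') = (g x y + g y x) + (g x' y + g y x') := by
  linear_combination (norm := abel1) h2 x x' y - h3 y x x'

theorem polar_diag_eq_add_swap
    (h1 : ∀ a b c d : A,
      f b c d - f (a + b) c d + f a (b + c) d - f a b (c + d) + f a b c = 0)
    (h2 : ∀ a b c : A, f a b c - f a c b + f c a b = g b c - g (a + b) c + g a c)
    (h3 : ∀ a b c : A, f a b c - f b a c + f b c a = -g a c + g a (b + c) - g a b)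
    (x y : A) :
    polar (fun a ↦ g a a) x y = g x y + g y x := by
  have pentagon := h1 x y x y
  rw [add_comm y x] at pentagon
  simp only [polar]
  linear_combination (norm := abel1) h2 x y x + h2 x y y - h3 (x + y) x y - pentagon

end Cocycle

theorem trace_of_EM_cocycle_is_quadratic
    {A M : Type*} [AddCommGroup A] [AddCommGroup M]
    (f : A → A → A → M) (g : A → A → M)
    (h1 : ∀ a b c d : A,
      f b c d - f (a + b) c d + f a (b + c) d - f a b (c + d) + f a b c = 0)
    (h2 : ∀ a b c : A,
      f a b c - f a c b + f c a b = g b c - g (a + b) c + g a c)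
    (h3 : ∀ a b c : A,
      f a b c - f b a c + f b c a = -g a c + g a (b + c) - g a b) :
    (∀ (n : ℤ) (a : A), g (n • a) (n • a) = n ^ 2 • g a a) ∧
    (∀ a a' b : A,
      (g (a + a' + b) (a + a' + b) - g (a + a') (a + a') - g b b) =
        (g (a + b) (a + b) - g a a - g b b) +
          (g (a' + b) (a' + b) - g a' a' - g b b)) ∧
    (∀ a b b' : A,
      (g (a + (b + b')) (a + (b + b')) - g a a - g (b + b') (b + b')) =
        (g (a + b) (a + b) - g a a - g b b) +
          (g (a + b') (a + b') - g a a - g b' b')) := by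
  have hpolar := polar_diag_eq_add_swap h1 h2 h3
  have hadd : ∀ x x' y : A, polar (fun a ↦ g a a) (x + x') y =
      polar (fun a ↦ g a a) x y + polar (fun a ↦ g a a) x' y := by
    simpa only [hpolar] using add_swap_add_left h2 h3
  have hself : ∀ x : A, polar (fun a ↦ g a a) x x = 2 • g x x := by
    simp [hpolar, two_smul]
  exact ⟨map_zsmul_of_polar hadd hself, hadd, polar_add_right_of_polar_add_left hadd⟩
end

section
/- Let A be a ring with identity 1, M an A-bimodule, and let g₊ : A×A → M, α₁ : A×A×A → M, α₂ : A×A×A → M be functions satisfying, for all a, b, c ∈ A: g₊(ac,bc) − g₊(a,b)·c = −α₁(a,b,c) + α₁(b,a,c) and g₊(ab,ac) − a·g₊(b,c) = α₂(a,b,c) − α₂(a,c,b). Then the map q : A → M defined by q(a) := g₊(a,a) satisfies q(ac) = q(a)·c and q(ab) = a·q(b) for all a, b, c ∈ A; consequently, setting m := g₊(1,1), the element m is central in M (a·m = m·a for all a ∈ A), q(a) = a·m = m·a for all a, and q is additive, i.e. q is an A-bimodule homomorphism determined by the central element m. If moreover g₊(a,b) + g₊(b,a) = 0 for all a, b ∈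 A, then 2·m = 0. -/
open MulOpposite

/-!
Putting `a = b` in the first equation, or `b = c` in the second, makes the two `α`-terms on the
right cancel, so the diagonal `q a = g a a` commutes with right, respectively left,
multiplication. Evaluating at `1` gives `q a = a • q 1 = q 1 • a`, hence `q 1` is central and `q`
is additive; antisymmetry of `g` at `(1, 1)` gives `2 • q 1 = 0`.
-/

section Diagonal

variable {A M : Type*} (g : A → A → M)

theorem diag_mul_right_of_sub_eq_antisymm [Mul A] [AddCommGroup M] [SMul Aᵐᵒᵖ M]
    (α₁ : A → A → A → M)
    (h1 : ∀ a b c : A, g (a * c) (b * c) - op c • g a b = -α₁ a b c + α₁ b a c) (a c : A) :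
    g (a * c) (a * c) = op c • g a a :=
  sub_eq_zero.mp <| (h1 a a c).trans (neg_add_cancel _)

theorem diag_mul_left_of_sub_eq_antisymm [Mul A] [AddCommGroup M] [SMul A M]
    (α₂ : A → A → A → M)
    (h2 : ∀ a b c : A, g (a * b) (a * c) - a • g b c = α₂ a b c - α₂ a c b) (a b : A) :
    g (a * b) (a * b) = a • g b b :=
  sub_eq_zero.mp <| (h2 a b b).trans (sub_self _)

theorem diag_eq_op_smul_diag_one [MulOneClass A] [SMul Aᵐᵒᵖ M]
    (hq : ∀ a c : A, g (a * c) (a * c) = op c • g a a) (a : A) :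
    g a a = op a • g 1 1 := by
  simpa using hq 1 a

theorem diag_eq_smul_diag_one [MulOneClass A] [SMul A M]
    (hq : ∀ a b : A, g (a * b) (a * b) = a • g b b) (a : A) :
    g a a = a • g 1 1 := by
  simpa using hq a 1

theorem two_smul_diag_eq_zero [AddCommGroup M] (hg : ∀ a b : A, g a b + g b a = 0) (x : A) :
    (2 : ℤ) • g x x = 0 := by
  rw [two_smul]
  exact hg x x

end Diagonal

theorem trace_is_bimodule_hom_of_central_element_general
    {A M : Type*} [Ring A] [AddCommGroup M] [Module A M] [Module Aᵐᵒᵖ M]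
    (g : A → A → M) (α₁ α₂ : A → A → A → M)
    (h1 : ∀ a b c : A, g (a * c) (b * c) - op c • g a b = -α₁ a b c + α₁ b a c)
    (h2 : ∀ a b c : A, g (a * b) (a * c) - a • g b c = α₂ a b c - α₂ a c b) :
    (∀ a c : A, g (a * c) (a * c) = op c • g a a) ∧
    (∀ a b : A, g (a * b) (a * b) = a • g b b) ∧
    (∀ a : A, a • g 1 1 = op a • g 1 1) ∧
    (∀ a : A, g a a = a • g 1 1 ∧ g a a = op a • g 1 1) ∧
    (∀ a b : A, g (a + b) (a + b) = g a a + g b b) ∧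
    ((∀ a b : A, g a b + g b a = 0) → (2 : ℤ) • g 1 1 = 0) := by
  have hright := diag_mul_right_of_sub_eq_antisymm g α₁ h1
  have hleft := diag_mul_left_of_sub_eq_antisymm g α₂ h2
  have hl := diag_eq_smul_diag_one g hleft
  have hr := diag_eq_op_smul_diag_one g hright
  refine ⟨hright, hleft, fun a => (hl a).symm.trans (hr a), fun a => ⟨hl a, hr a⟩, ?_,
    fun hg => two_smul_diag_eq_zero g hg 1⟩
  intro a b
  rw [hl (a + b), hl a, hl b, add_smul]

theorem trace_is_bimodule_hom_of_central_element
    {A M : Type*} [Ring A] [AddCommGroup M] [Module A M] [Module Aᵐᵒᵖ M]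
    [SMulCommClass A Aᵐᵒᵖ M]
    (g : A → A → M) (α₁ α₂ : A → A → A → M)
    (h1 : ∀ a b c : A, g (a * c) (b * c) - op c • g a b = -α₁ a b c + α₁ b a c)
    (h2 : ∀ a b c : A, g (a * b) (a * c) - a • g b c = α₂ a b c - α₂ a c b) :
    (∀ a c : A, g (a * c) (a * c) = op c • g a a) ∧
    (∀ a b : A, g (a * b) (a * b) = a • g b b) ∧
    (∀ a : A, a • g 1 1 = op a • g 1 1) ∧
    (∀ a : A, g a a = a • g 1 1 ∧ g a a = op a • g 1 1) ∧
    (∀ a b : A, g (a + b) (a + b) = g a a + g b b) ∧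
    ((∀ a b : A, g a b + g b a = 0) → (2 : ℤ) • g 1 1 = 0) :=
  trace_is_bimodule_hom_of_central_element_general g α₁ α₂ h1 h2
end

section
/- Let A be a ring with identity 1, M an A-bimodule, and let g₊ : A×A → M, α₁ : A×A×A → M, α₂ : A×A×A → M be functions satisfying the twisted equations, for all a, b, c ∈ A: −g₊(bc,ac) − g₊(a,b)·c = −α₁(a,b,c) + α₁(b,a,c) and −g₊(ac,ab) − a·g₊(b,c) = α₂(a,b,c) − α₂(a,c,b). Then q(a) := g₊(a,a) satisfies q(ac) = −q(a)·c and q(ab) = −a·q(b) for all a, b, c ∈ A, and consequently 2·g₊(a,a) = 0 for all a ∈ A. -/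
/-!
Specialising the first twisted equation to `a = b` and the second to `b = c` makes the
`α`-terms cancel, leaving `q(ac) = −q(a)·c` and `q(ab) = −a·q(b)` for `q(a) = g₊(a,a)`.
Taking `c = 1` in the first gives `q(a) = −q(a)`.
-/

open MulOpposite

theorem diag_mul_right_eq_neg_op_smul {A M : Type*} [Mul A] [AddGroup M] [SMul Aᵐᵒᵖ M]
    (g : A → A → M) (α₁ : A → A → A → M)
    (h1 : ∀ a b c : A, -g (b * c) (a * c) - op c • g a b = -α₁ a b c + α₁ b a c) (a c : A) :
    g (a * c) (a * c) = -(op c • g a a) := by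
  have h := h1 a a c
  rw [neg_add_cancel, sub_eq_zero] at h
  exact neg_eq_iff_eq_neg.mp h

theorem diag_mul_left_eq_neg_smul {A M : Type*} [Mul A] [AddGroup M] [SMul A M]
    (g : A → A → M) (α₂ : A → A → A → M)
    (h2 : ∀ a b c : A, -g (a * c) (a * b) - a • g b c = α₂ a b c - α₂ a c b) (a b : A) :
    g (a * b) (a * b) = -(a • g b b) := by
  have h := h2 a b b
  rw [sub_self, sub_eq_zero] at h
  exact neg_eq_iff_eq_neg.mp h

theorem two_zsmul_eq_zero_of_map_mul_eq_neg_op_smul {A M : Type*} [Monoid A] [AddGroup M]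
    [MulAction Aᵐᵒᵖ M] (q : A → M) (hq : ∀ a c : A, q (a * c) = -(op c • q a)) (a : A) :
    (2 : ℤ) • q a = 0 := by
  have h : q a = -q a := by simpa using hq a 1
  rw [two_zsmul, ← eq_neg_iff_add_eq_zero]
  exact h

theorem twisted_trace_two_torsion_general
    {A M : Type*} [Ring A] [AddCommGroup M] [Module A M] [Module Aᵐᵒᵖ M]
    (g : A → A → M) (α₁ α₂ : A → A → A → M)
    (h1 : ∀ a b c : A, -g (b * c) (a * c) - op c • g a b = -α₁ a b c + α₁ b a c)
    (h2 : ∀ a b c : A, -g (a * c) (a * b) - a • g b c = α₂ a b c - α₂ a c b) :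
    (∀ a c : A, g (a * c) (a * c) = -(op c • g a a)) ∧
    (∀ a b : A, g (a * b) (a * b) = -(a • g b b)) ∧
    (∀ a : A, (2 : ℤ) • g a a = 0) :=
  have diag_mul_right := diag_mul_right_eq_neg_op_smul g α₁ h1
  ⟨diag_mul_right, diag_mul_left_eq_neg_smul g α₂ h2,
    two_zsmul_eq_zero_of_map_mul_eq_neg_op_smul (fun a => g a a) diag_mul_right⟩

theorem twisted_trace_two_torsion
    {A M : Type*} [Ring A] [AddCommGroup M] [Module A M] [Module Aᵐᵒᵖ M]
    [SMulCommClass A Aᵐᵒᵖ M]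
    (g : A → A → M) (α₁ α₂ : A → A → A → M)
    (h1 : ∀ a b c : A, -g (b * c) (a * c) - op c • g a b = -α₁ a b c + α₁ b a c)
    (h2 : ∀ a b c : A, -g (a * c) (a * b) - a • g b c = α₂ a b c - α₂ a c b) :
    (∀ a c : A, g (a * c) (a * c) = -(op c • g a a)) ∧
    (∀ a b : A, g (a * b) (a * b) = -(a • g b b)) ∧
    (∀ a : A, (2 : ℤ) • g a a = 0) :=
  twisted_trace_two_torsion_general g α₁ α₂ h1 h2
end

section
/- Let A be a ring with identity 1 and M an A-bimodule. Suppose the functions f, α₁, α₂, f₊ : A×A×A → M and g₊ : A×A → M satisfy, for all a, b, c, d ∈ A, the twisted cocycle system: (T1) a·f(b,c,d) − f(ab,c,d) + f(a,bc,d) − f(a,b,cd) + f(a,b,c)·d = 0; (T2) f(b,c,d) − f(a+b,c,d) + f(a,c,d) = α₁(ac,bc,d) − α₁(a,b,cd) + α₁(a,b,c)·d; (T3) −f(a,c,d) + f(a,b+c,d) − f(a,b,d) = a·α₁(b,c,d) − α₁(ab,ac,d) − α₂(a,bd,cd) + α₂(a,b,c)·d; (T4) f(a,b,d) − f(a,b,c+d)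 + f(a,b,c) = a·α₂(b,c,d) − α₂(ab,c,d) + α₂(a,bc,bd); (T5) f₊(ac,bc,ad+bd) − f₊(ac,ad,bc+bd) + f₊(ad,bc,bd) − f₊(bc,ad,bd) − g₊(bc,ad) = α₁(a,b,d) − α₁(a,b,c+d) + α₁(a,b,c) + α₂(b,c,d) − α₂(a+b,c,d) + α₂(a,c,d); (T6) f₊(ad,bd,cd) − f₊(a,b,c)·d = −α₁(b,c,d) + α₁(a+b,c,d) − α₁(a,b+c,d) + α₁(a,b,d); (T7) f₊(ab,ac,ad) − a·f₊(b,c,d) = α₂(a,c,d) − α₂(a,b+c,d) + α₂(a,b,c+d) − α₂(a,b,c); (T8) −g₊(bc,ac) − g₊(a,b)·c = −α₁(a,b,c) + α₁(b,a,c); (T9) −g₊(ac,ab) − a·g₊(b,c) = α₂(a,b,c) − α₂(a,c,b); (T10) f₊(b,c,d) − f₊(a+b,c,d) + f₊(a,b+c,d) − f₊(a,b,c+d) + f₊(a,b,c) = 0; (T11) f₊(a,b,c) − f₊(a,c,b) + f₊(c,a,b) = g₊(b,c) − g₊(a+b,c) + g₊(a,c); (T12) f₊(a,b,c) − f₊(b,a,c)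 + f₊(b,c,a) = −g₊(a,c) + g₊(a,b+c) − g₊(a,b). Then g₊(a,b) + g₊(b,a) = 0 for all a, b ∈ A, and consequently (f, α₁, α₂, f₊, g₊) satisfies the untwisted cocycle system (in which (T8) and (T9) are replaced by g₊(ac,bc) − g₊(a,b)·c = −α₁(a,b,c) + α₁(b,a,c) and g₊(ab,ac) − a·g₊(b,c) = α₂(a,b,c) − α₂(a,c,b), and the antisymmetry equation g₊(a,b) + g₊(b,a) = 0 is added). -/
/-!
Setting `c = d = 1` in (T2) exhibits `α₁(a, b, 1)` as the coboundary
`f(a,1,1) + f(b,1,1) - f(a+b,1,1)`, which is symmetric in `a, b`. Then (T8) at `c = 1`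
reads `-gp(b,a) - gp(a,b) = 0`, and antisymmetry of `gp` turns (T8), (T9) into their
untwisted forms.
-/

open MulOpposite

section TwistedCocycle

variable {A M : Type*} [Ring A] [AddCommGroup M] [Module Aᵐᵒᵖ M]

lemma symm_apply_one_of_twisted_additivity {f α₁ : A → A → A → M}
    (hT2 : ∀ a b c d : A,
      f b c d - f (a + b) c d + f a c d =
        α₁ (a * c) (b * c) d - α₁ a b (c * d) + op d • α₁ a b c)
    (a b : A) : α₁ a b 1 = α₁ b a 1 := by
  have coboundary : ∀ a b : A, α₁ a b 1 = f a 1 1 + f b 1 1 - f (a + b) 1 1 := by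
    intro a b
    have h := hT2 a b 1 1
    simp only [mul_one, op_one, one_smul, sub_add_cancel] at h
    rw [← h]
    abel
  rw [coboundary, coboundary, add_comm b a, add_comm (f b 1 1)]

lemma add_swap_eq_zero_of_twisted_symm {α₁ : A → A → A → M} {gp : A → A → M}
    (hT8 : ∀ a b c : A, -gp (b * c) (a * c) - op c • gp a b = -α₁ a b c + α₁ b a c)
    (hsymm : ∀ a b : A, α₁ a b 1 = α₁ b a 1) (a b : A) : gp a b + gp b a = 0 := by
  have h := hT8 a b 1
  simp only [mul_one, op_one, one_smul, hsymm a b, neg_add_cancel] at h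
  rw [← neg_eq_zero, ← h]
  abel

end TwistedCocycle

theorem twisted_cocycle_is_untwisted_of_unital_general
    {A M : Type*} [Ring A] [AddCommGroup M] [Module A M] [Module Aᵐᵒᵖ M]
    (f α₁ α₂ : A → A → A → M) (gp : A → A → M)
    (hT2 : ∀ a b c d : A,
      f b c d - f (a + b) c d + f a c d =
        α₁ (a * c) (b * c) d - α₁ a b (c * d) + op d • α₁ a b c)
    (hT8 : ∀ a b c : A,
      -gp (b * c) (a * c) - op c • gp a b = -α₁ a b c + α₁ b a c)
    (hT9 : ∀ a b c : A,
      -gp (a * c) (a * b) - a • gp b c = α₂ a b c - α₂ a c b) :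
    (∀ a b : A, gp a b + gp b a = 0) ∧
    (∀ a b c : A,
      gp (a * c) (b * c) - op c • gp a b = -α₁ a b c + α₁ b a c) ∧
    (∀ a b c : A,
      gp (a * b) (a * c) - a • gp b c = α₂ a b c - α₂ a c b) := by
  have antisymm : ∀ a b : A, gp a b + gp b a = 0 :=
    add_swap_eq_zero_of_twisted_symm hT8 (symm_apply_one_of_twisted_additivity hT2)
  have swap : ∀ a b : A, gp a b = -gp b a := fun a b => eq_neg_of_add_eq_zero_left (antisymm a b)
  refine ⟨antisymm, fun a b c => ?_, fun a b c => ?_⟩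
  · rw [swap]
    exact hT8 a b c
  · rw [swap]
    exact hT9 a b c

theorem twisted_cocycle_is_untwisted_of_unital
    {A M : Type*} [Ring A] [AddCommGroup M] [Module A M] [Module Aᵐᵒᵖ M]
    [SMulCommClass A Aᵐᵒᵖ M]
    (f α₁ α₂ fp : A → A → A → M) (gp : A → A → M)
    (hT1 : ∀ a b c d : A,
      a • f b c d - f (a * b) c d + f a (b * c) d - f a b (c * d)
        + op d • f a b c = 0)
    (hT2 : ∀ a b c d : A,
      f b c d - f (a + b) c d + f a c d =
        α₁ (a * c) (b * c) d - α₁ a b (c * d) + op d • α₁ a b c)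
    (hT3 : ∀ a b c d : A,
      -f a c d + f a (b + c) d - f a b d =
        a • α₁ b c d - α₁ (a * b) (a * c) d - α₂ a (b * d) (c * d)
          + op d • α₂ a b c)
    (hT4 : ∀ a b c d : A,
      f a b d - f a b (c + d) + f a b c =
        a • α₂ b c d - α₂ (a * b) c d + α₂ a (b * c) (b * d))
    (hT5 : ∀ a b c d : A,
      fp (a * c) (b * c) (a * d + b * d) - fp (a * c) (a * d) (b * c + b * d)
          + fp (a * d) (b * c) (b * d) - fp (b * c) (a * d) (b * d)
          - gp (b * c) (a * d) =
        α₁ a b d - α₁ a b (c + d) + α₁ a b c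
          + α₂ b c d - α₂ (a + b) c d + α₂ a c d)
    (hT6 : ∀ a b c d : A,
      fp (a * d) (b * d) (c * d) - op d • fp a b c =
        -α₁ b c d + α₁ (a + b) c d - α₁ a (b + c) d + α₁ a b d)
    (hT7 : ∀ a b c d : A,
      fp (a * b) (a * c) (a * d) - a • fp b c d =
        α₂ a c d - α₂ a (b + c) d + α₂ a b (c + d) - α₂ a b c)
    (hT8 : ∀ a b c : A,
      -gp (b * c) (a * c) - op c • gp a b = -α₁ a b c + α₁ b a c)
    (hT9 : ∀ a b c : A,
      -gp (a * c) (a * b) - a • gp b c = α₂ a b c - α₂ a c b)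
    (hT10 : ∀ a b c d : A,
      fp b c d - fp (a + b) c d + fp a (b + c) d - fp a b (c + d) + fp a b c = 0)
    (hT11 : ∀ a b c : A,
      fp a b c - fp a c b + fp c a b = gp b c - gp (a + b) c + gp a c)
    (hT12 : ∀ a b c : A,
      fp a b c - fp b a c + fp b c a = -gp a c + gp a (b + c) - gp a b) :
    (∀ a b : A, gp a b + gp b a = 0) ∧
    (∀ a b c : A,
      gp (a * c) (b * c) - op c • gp a b = -α₁ a b c + α₁ b a c) ∧
    (∀ a b c : A,
      gp (a * b) (a * c) - a • gp b c = α₂ a b c - α₂ a c b) :=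
  twisted_cocycle_is_untwisted_of_unital_general f α₁ α₂ gp hT2 hT8 hT9
end

section
/- Let H and K be groups and (G, Π, ∂) a crossed module. Let g₁ : H×H×K → G and x : H×K → Π be functions. For each k ∈ K define a binary operation on H×G by (h,a) ∗_k (h',a') := (hh', g₁(h,h',k) · a^{x(h',k)} · a'), and a map j_k : H×G → Π by j_k(h,a) := x(h,k)·∂(a). Then: (1) if for all h, h', h'' ∈ H and k ∈ K the cocycle identities g₁(hh',h'',k) · g₁(h,h',k)^{x(h'',k)} = g₁(h,h'h'',k) · g₁(h',h'',k) and x(h,k)·x(h',k) = x(hh',k)·∂(g₁(h,h',k)) hold, then each ∗_k is associative and each j_k is multiplicative, i.e. j_k((h,a) ∗_k (h',a')) = j_k(h,a)·j_k(h',a'); (2) conversely, if ∗_k is associative for all k then the first identity holds for all h, h', h'', k, and if j_k is multiplicative for all k then the second identity holds for all h, h', k. -/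
/-!
Both directions are direct computations in `H × G`. The map `j_k` differs from a homomorphism
by the left factor `x(hh',k)·∂g₁(h,h',k)·(x(h,k)·x(h',k))⁻¹`, which vanishes exactly under the
second identity. For associativity, the second identity and the crossed-module axiom
`g^{∂h} = h⁻¹gh` turn `a^{x(h',k)·x(h'',k)}` into `a^{x(h'h'',k)}` conjugated by `g₁(h',h'',k)`,
after which the two bracketings differ only by the first identity; conversely, evaluating
associativity and multiplicativity at elements with trivial `G`-component recovers the identities.
-/

/-- A crossed module `(G, P, ∂)`: a homomorphism `∂ : G → P` together with a
right action of `P` on `G` by group automorphisms satisfying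
`∂(g^x) = x⁻¹·∂(g)·x` and `g^{∂h} = h⁻¹gh`. -/
structure CrossedModule (G P : Type*) [Group G] [Group P] where
  /-- the homomorphism `∂ : G → P` -/
  d : G →* P
  /-- the right action `g^x` of `P` on `G` -/
  act : G → P → G
  act_one : ∀ g : G, act g 1 = g
  act_mul : ∀ (g : G) (x y : P), act g (x * y) = act (act g x) y
  act_map_mul : ∀ (g h : G) (x : P), act (g * h) x = act g x * act h x
  d_act : ∀ (g : G) (x : P), d (act g x) = x⁻¹ * d g * x
  act_d : ∀ g h : G, act g (d h) = h⁻¹ * g * h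

variable {H K G P : Type*} [Group H] [Group K] [Group G] [Group P]

/-- The partial product `(h,a) ∗_k (h',a') = (hh', g₁(h,h',k) · a^{x(h',k)} · a')`. -/
def partialMul (M : CrossedModule G P) (g₁ : H → H → K → G) (x : H → K → P)
    (k : K) (p q : H × G) : H × G :=
  (p.1 * q.1, g₁ p.1 q.1 k * M.act p.2 (x q.1 k) * q.2)

/-- The map `j_k(h,a) = x(h,k)·∂(a)`. -/
def jMap (M : CrossedModule G P) (x : H → K → P) (k : K) (p : H × G) : P :=
  x p.1 k * M.d p.2

namespace CrossedModule

variable (M : CrossedModule G P)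

theorem one_act (y : P) : M.act 1 y = 1 := by
  simpa using M.act_map_mul 1 1 y

theorem act_mul_d (a g : G) (y : P) : M.act a (y * M.d g) = g⁻¹ * M.act a y * g := by
  rw [M.act_mul, M.act_d]

end CrossedModule

section PartialMul

omit [Group K]

variable (M : CrossedModule G P) (g₁ : H → H → K → G) (x : H → K → P) (k : K)

theorem jMap_partialMul (p q : H × G) :
    jMap M x k (partialMul M g₁ x k p q) =
      x (p.1 * q.1) k * M.d (g₁ p.1 q.1 k) * (x p.1 k * x q.1 k)⁻¹ *
        (jMap M x k p * jMap M x k q) := by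
  simp only [jMap, partialMul, map_mul, M.d_act]
  group

theorem jMap_mul_iff :
    (∀ p q : H × G,
        jMap M x k (partialMul M g₁ x k p q) = jMap M x k p * jMap M x k q) ↔
      ∀ h h' : H, x h k * x h' k = x (h * h') k * M.d (g₁ h h' k) := by
  simp only [jMap_partialMul, mul_eq_right, mul_inv_eq_one, eq_comm (a := x _ k * x _ k)]
  exact ⟨fun hj h h' => hj (h, 1) (h', 1), fun hc p q => hc p.1 q.1⟩

theorem partialMul_assoc
    (hc₁ : ∀ h h' h'' : H, g₁ (h * h') h'' k * M.act (g₁ h h' k) (x h'' k) =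
      g₁ h (h' * h'') k * g₁ h' h'' k)
    (hc₂ : ∀ h h' : H, x h k * x h' k = x (h * h') k * M.d (g₁ h h' k))
    (p q r : H × G) :
    partialMul M g₁ x k (partialMul M g₁ x k p q) r =
      partialMul M g₁ x k p (partialMul M g₁ x k q r) := by
  obtain ⟨h, a⟩ := p
  obtain ⟨h', a'⟩ := q
  obtain ⟨h'', a''⟩ := r
  refine Prod.ext (mul_assoc h h' h'') ?_
  have hconj : M.act a (x h' k * x h'' k) =
      (g₁ h' h'' k)⁻¹ * M.act a (x (h' * h'') k) * g₁ h' h'' k := by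
    rw [hc₂, M.act_mul_d]
  simp only [partialMul, M.act_map_mul, ← M.act_mul]
  calc g₁ (h * h') h'' k * (M.act (g₁ h h' k) (x h'' k) *
          M.act a (x h' k * x h'' k) * M.act a' (x h'' k)) * a''
      = (g₁ (h * h') h'' k * M.act (g₁ h h' k) (x h'' k)) *
          M.act a (x h' k * x h'' k) * (M.act a' (x h'' k) * a'') := by group
    _ = (g₁ h (h' * h'') k * g₁ h' h'' k) *
          ((g₁ h' h'' k)⁻¹ * M.act a (x (h' * h'') k) * g₁ h' h'' k) *
          (M.act a' (x h'' k) * a'') := by rw [hc₁, hconj]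
    _ = g₁ h (h' * h'') k * M.act a (x (h' * h'') k) *
          (g₁ h' h'' k * M.act a' (x h'' k) * a'') := by group

theorem cocycle_of_partialMul_assoc
    (hassoc : ∀ p q r : H × G, partialMul M g₁ x k (partialMul M g₁ x k p q) r =
      partialMul M g₁ x k p (partialMul M g₁ x k q r))
    (h h' h'' : H) :
    g₁ (h * h') h'' k * M.act (g₁ h h' k) (x h'' k) = g₁ h (h' * h'') k * g₁ h' h'' k := by
  simpa [partialMul, M.one_act] using congrArg Prod.snd (hassoc (h, 1) (h', 1) (h'', 1))

end PartialMul

theorem partialMul_assoc_and_jMap_mul_iff_cocycle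
    (M : CrossedModule G P) (g₁ : H → H → K → G) (x : H → K → P) :
    -- (1)
    (((∀ (h h' h'' : H) (k : K),
        g₁ (h * h') h'' k * M.act (g₁ h h' k) (x h'' k) =
          g₁ h (h' * h'') k * g₁ h' h'' k) ∧
      (∀ (h h' : H) (k : K),
        x h k * x h' k = x (h * h') k * M.d (g₁ h h' k))) →
      ((∀ (k : K) (p q r : H × G),
          partialMul M g₁ x k (partialMul M g₁ x k p q) r =
            partialMul M g₁ x k p (partialMul M g₁ x k q r)) ∧
       (∀ (k : K) (p q : H × G),
          jMap M x k (partialMul M g₁ x k p q) = jMap M x k p * jMap M x k q))) ∧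
    -- (2)
    ((∀ (k : K) (p q r : H × G),
        partialMul M g₁ x k (partialMul M g₁ x k p q) r =
          partialMul M g₁ x k p (partialMul M g₁ x k q r)) →
      ∀ (h h' h'' : H) (k : K),
        g₁ (h * h') h'' k * M.act (g₁ h h' k) (x h'' k) =
          g₁ h (h' * h'') k * g₁ h' h'' k) ∧
    ((∀ (k : K) (p q : H × G),
        jMap M x k (partialMul M g₁ x k p q) = jMap M x k p * jMap M x k q) →
      ∀ (h h' : H) (k : K),
        x h k * x h' k = x (h * h') k * M.d (g₁ h h' k)) := by
  refine ⟨fun ⟨hc₁, hc₂⟩ => ⟨fun k => ?_, fun k => ?_⟩, ?_, ?_⟩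
  · exact partialMul_assoc M g₁ x k (hc₁ · · · k) (hc₂ · · k)
  · exact (jMap_mul_iff M g₁ x k).2 (hc₂ · · k)
  · exact fun hassoc h h' h'' k => cocycle_of_partialMul_assoc M g₁ x k (hassoc k) h h' h''
  · exact fun hj h h' k => (jMap_mul_iff M g₁ x k).1 (hj k) h h'
end

section
/- Let H and K be groups and (G, Π, ∂, ⟨-,-⟩) a braided crossed module. Let g₁ : H×H×K → G, g₂ : H×K×K → G and x : H×K → Π satisfy, for all h, h', h'' ∈ H and k, k', k'' ∈ K: g₁(hh',h'',k)·g₁(h,h',k)^{x(h'',k)} = g₁(h,h'h'',k)·g₁(h',h'',k); x(h,k)·x(h',k) = x(hh',k)·∂(g₁(h,h',k)); g₂(h,kk',k'')·g₂(h,k,k')^{x(h,k'')} = g₂(h,k,k'k'')·g₂(h,k',k''); and x(h,k)·x(h,k') = x(h,kk')·∂(g₂(h,k,k')). On E := H×K×G define the partial operations (h,k,a) ×₁ (h',k,a') := (hh', k, g₁(h,h',k)·a^{x(h',k)}·a') and (h,k,b) ×₂ (h,k',b') := (h, kk', g₂(h,k,k')·b^{x(h,k')}·b'), the map j(h,k,a)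 := x(h,k)·∂(a) ∈ Π, and the right G-action (h,k,a)·g := (h,k,ag). Then the following are equivalent: (i) for all h, h' ∈ H, k, k' ∈ K and all u ∈ {h}×{k}×G, u' ∈ {h'}×{k}×G, v ∈ {h}×{k'}×G, v' ∈ {h'}×{k'}×G, the interchange relation (u ×₁ u') ×₂ (v ×₁ v') = ((u ×₂ v) ×₁ (u' ×₂ v')) · (⟨j(u'), j(v)⟩^{j(v')})⁻¹ holds; (ii) for all h, h' ∈ H and k, k' ∈ K: g₂(hh',k,k')·g₁(h,h',k)^{x(hh',k')}·g₁(h,h',k') = g₁(h,h',kk')·g₂(h,k,k')^{x(h',kk')}·g₂(h',k,k')·(⟨x(h',k), x(h,k')⟩^{x(h',k')})⁻¹. -/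
/-!
Conjugation by `c` turns `a ^ u` into `a ^ (u ∂c)`, and the braiding of
`p ∂a'` with `q ∂b` is `⟨p, q⟩` conjugated by explicit elements of `G`. Using the cocycle
relations for `x`, both sides of the interchange relation at `(a, a', b, b')` therefore
factor as their value at `a = a' = b = b' = 1` times one and the same element of `G`, so the
interchange relation holds everywhere iff it holds at `1`, which is the cocycle formula.
-/

/-- A braided crossed module `(G, P, ∂, ⟨-,-⟩)`. -/
structure BraidedCrossedModule (G P : Type*) [Group G] [Group P] where
  /-- the homomorphism `∂ : G → P` -/
  d : G →* P
  /-- the right action `g^x` of `P` on `G` -/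
  act : G → P → G
  act_one : ∀ g : G, act g 1 = g
  act_mul : ∀ (g : G) (x y : P), act g (x * y) = act (act g x) y
  act_map_mul : ∀ (g h : G) (x : P), act (g * h) x = act g x * act h x
  d_act : ∀ (g : G) (x : P), d (act g x) = x⁻¹ * d g * x
  act_d : ∀ g h : G, act g (d h) = h⁻¹ * g * h
  /-- the braiding `⟨-,-⟩ : P × P → G` -/
  brk : P → P → G
  d_brk : ∀ x y : P, d (brk x y) = y⁻¹ * x⁻¹ * y * x
  brk_mul_right : ∀ x y z : P, brk x (y * z) = act (brk x y) z * brk x z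
  brk_mul_left : ∀ x y z : P, brk (x * y) z = brk y z * act (brk x z) y
  brk_d : ∀ (x : P) (h : G), brk x (d h) = h⁻¹ * act h x
  d_brk' : ∀ (g : G) (y : P), brk (d g) y = (act g y)⁻¹ * g

variable {H K G P : Type*} [Group H] [Group K] [Group G] [Group P]

namespace BraidedCrossedModule

variable (M : BraidedCrossedModule G P)

def actHom (x : P) : G →* G :=
  MonoidHom.mk' (M.act · x) (M.act_map_mul · · x)

lemma one_act (x : P) : M.act 1 x = 1 :=
  (M.actHom x).map_one

lemma inv_act (g : G) (x : P) : M.act g⁻¹ x = (M.act g x)⁻¹ :=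
  (M.actHom x).map_inv g

lemma act_mul_eq_mul_act (a c : G) {u v : P} (h : u * M.d c = v) :
    M.act a u * c = c * M.act a v := by
  rw [← h, M.act_mul, M.act_d]
  group

lemma brk_mul_d_mul_d (p q : P) (a b : G) :
    M.brk (p * M.d a) (q * M.d b) =
      b⁻¹ * (M.act a q)⁻¹ * M.brk p q * M.act b p * a := by
  rw [M.brk_mul_left, M.d_brk', M.brk_mul_right, M.brk_d, M.act_mul]
  simp only [M.act_d]
  group

variable {p q q' X Y : P} {c c' : G}

lemma interchange_left_eq (hY : q * q' = Y * M.d c) (e g a a' b b' : G) :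
    e * M.act (g * M.act a p * a') Y * (c * M.act b q' * b') =
      e * M.act g Y * c *
        (M.act a (p * (q * q')) * M.act a' (q * q') * M.act b q' * b') := by
  have hp : M.act a (p * Y) * c = c * M.act a (p * (q * q')) :=
    M.act_mul_eq_mul_act a c (by rw [hY, mul_assoc])
  have ha' : M.act a' Y * c = c * M.act a' (q * q') :=
    M.act_mul_eq_mul_act a' c hY.symm
  calc e * M.act (g * M.act a p * a') Y * (c * M.act b q' * b')
      = e * M.act g Y * M.act a (p * Y) * (M.act a' Y * c) * M.act b q' * b' := by
        rw [M.act_map_mul, M.act_map_mul, ← M.act_mul]; group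
    _ = e * M.act g Y * (M.act a (p * Y) * c) * M.act a' (q * q') * M.act b q' * b' := by
        rw [ha']; group
    _ = _ := by rw [hp]; group

lemma interchange_right_eq (hX : p * q' = X * M.d c') (e g a a' b b' : G) :
    e * M.act (g * M.act a q * b) X * (c' * M.act a' q' * b') *
        (M.act (M.brk (p * M.d a') (q * M.d b)) (q' * M.d b'))⁻¹ =
      e * M.act g X * c' * (M.act (M.brk p q) q')⁻¹ *
        (M.act a (p * (q * q')) * M.act a' (q * q') * M.act b q' * b') := by
  have hq : M.act a (q * X) * c' = c' * M.act a (q * (p * q')) :=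
    M.act_mul_eq_mul_act a c' (by rw [mul_assoc, hX])
  have hb : M.act b X * c' = c' * M.act b (p * q') :=
    M.act_mul_eq_mul_act b c' hX.symm
  -- `∂` of the braiding correction is the commutator carrying `q p q'` to `p q q'`
  have hbrk : M.act a (p * (q * q')) * M.act (M.brk p q) q' =
      M.act (M.brk p q) q' * M.act a (q * (p * q')) :=
    M.act_mul_eq_mul_act a _ (by rw [M.d_act, M.d_brk]; group)
  have hcorr : M.act (M.brk (p * M.d a') (q * M.d b)) (q' * M.d b') =
      b'⁻¹ * ((M.act b q')⁻¹ * (M.act a' (q * q'))⁻¹ *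
        M.act (M.brk p q) q' * M.act b (p * q') * M.act a' q') * b' := by
    rw [M.brk_mul_d_mul_d, M.act_mul, M.act_d]
    simp only [M.act_map_mul, M.inv_act, ← M.act_mul]
  calc e * M.act (g * M.act a q * b) X * (c' * M.act a' q' * b') *
        (M.act (M.brk (p * M.d a') (q * M.d b)) (q' * M.d b'))⁻¹
      = e * M.act g X * (M.act a (q * X) * (M.act b X * c')) * M.act a' q' * b' *
          (M.act (M.brk (p * M.d a') (q * M.d b)) (q' * M.d b'))⁻¹ := by
        rw [M.act_map_mul, M.act_map_mul, ← M.act_mul]; group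
    _ = e * M.act g X * c' * M.act a (q * (p * q')) * (M.act (M.brk p q) q')⁻¹ *
          (M.act a' (q * q') * M.act b q' * b') := by
        rw [hb, ← mul_assoc (M.act a (q * X)), hq, hcorr]; group
    _ = _ := by
        rw [eq_inv_mul_of_mul_eq hbrk.symm]; group

lemma forall_interchange_iff (hY : q * q' = Y * M.d c) (hX : p * q' = X * M.d c')
    (e g e' g' : G) :
    (∀ a a' b b' : G,
      e * M.act (g * M.act a p * a') Y * (c * M.act b q' * b') =
        e' * M.act (g' * M.act a q * b) X * (c' * M.act a' q' * b') *
          (M.act (M.brk (p * M.d a') (q * M.d b)) (q' * M.d b'))⁻¹) ↔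
      e * M.act g Y * c = e' * M.act g' X * c' * (M.act (M.brk p q) q')⁻¹ := by
  constructor
  · intro hi
    simpa [M.one_act, M.act_one] using hi 1 1 1 1
  · intro h a a' b b'
    rw [M.interchange_left_eq hY, M.interchange_right_eq hX, h]

end BraidedCrossedModule

theorem biextension_interchange_iff_cocycle_interchange_general
    (M : BraidedCrossedModule G P)
    (g₁ : H → H → K → G) (g₂ : H → K → K → G) (x : H → K → P)
    (hx₁ : ∀ (h h' : H) (k : K),
      x h k * x h' k = x (h * h') k * M.d (g₁ h h' k))
    (hx₂ : ∀ (h : H) (k k' : K),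
      x h k * x h k' = x h (k * k') * M.d (g₂ h k k')) :
    -- (i): pointwise interchange law on `E = H × K × G`, with the right
    -- `G`-action `(h,k,a)·g = (h,k,ag)` and `j(h,k,a) = x(h,k)·∂(a)`:
    -- `(u ×₁ u') ×₂ (v ×₁ v') = ((u ×₂ v) ×₁ (u' ×₂ v')) · (⟨j u', j v⟩^{j v'})⁻¹`
    (∀ (h h' : H) (k k' : K) (a a' b b' : G),
      ((h * h', k * k',
        g₂ (h * h') k k'
          * M.act (g₁ h h' k * M.act a (x h' k) * a') (x (h * h') k')
          * (g₁ h h' k' * M.act b (x h' k') * b')) : H × K × G) =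
      ((h * h', k * k',
        (g₁ h h' (k * k')
            * M.act (g₂ h k k' * M.act a (x h k') * b) (x h' (k * k'))
            * (g₂ h' k k' * M.act a' (x h' k') * b'))
          * (M.act (M.brk (x h' k * M.d a') (x h k' * M.d b))
              (x h' k' * M.d b'))⁻¹) : H × K × G))
    ↔
    -- (ii): the cocycle interchange formula
    (∀ (h h' : H) (k k' : K),
      g₂ (h * h') k k' * M.act (g₁ h h' k) (x (h * h') k') * g₁ h h' k' =
        g₁ h h' (k * k') * M.act (g₂ h k k') (x h' (k * k')) * g₂ h' k k'
          * (M.act (M.brk (x h' k) (x h k')) (x h' k'))⁻¹) := by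
  refine forall₄_congr fun h h' k k' => ?_
  simp only [Prod.mk.injEq, true_and]
  exact M.forall_interchange_iff (hx₁ h h' k') (hx₂ h' k k') _ _ _ _

theorem biextension_interchange_iff_cocycle_interchange
    (M : BraidedCrossedModule G P)
    (g₁ : H → H → K → G) (g₂ : H → K → K → G) (x : H → K → P)
    (hg₁ : ∀ (h h' h'' : H) (k : K),
      g₁ (h * h') h'' k * M.act (g₁ h h' k) (x h'' k) =
        g₁ h (h' * h'') k * g₁ h' h'' k)
    (hx₁ : ∀ (h h' : H) (k : K),
      x h k * x h' k = x (h * h') k * M.d (g₁ h h' k))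
    (hg₂ : ∀ (h : H) (k k' k'' : K),
      g₂ h (k * k') k'' * M.act (g₂ h k k') (x h k'') =
        g₂ h k (k' * k'') * g₂ h k' k'')
    (hx₂ : ∀ (h : H) (k k' : K),
      x h k * x h k' = x h (k * k') * M.d (g₂ h k k')) :
    -- (i): pointwise interchange law on `E = H × K × G`, with the right
    -- `G`-action `(h,k,a)·g = (h,k,ag)` and `j(h,k,a) = x(h,k)·∂(a)`:
    -- `(u ×₁ u') ×₂ (v ×₁ v') = ((u ×₂ v) ×₁ (u' ×₂ v')) · (⟨j u', j v⟩^{j v'})⁻¹`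
    (∀ (h h' : H) (k k' : K) (a a' b b' : G),
      ((h * h', k * k',
        g₂ (h * h') k k'
          * M.act (g₁ h h' k * M.act a (x h' k) * a') (x (h * h') k')
          * (g₁ h h' k' * M.act b (x h' k') * b')) : H × K × G) =
      ((h * h', k * k',
        (g₁ h h' (k * k')
            * M.act (g₂ h k k' * M.act a (x h k') * b) (x h' (k * k'))
            * (g₂ h' k k' * M.act a' (x h' k') * b'))
          * (M.act (M.brk (x h' k * M.d a') (x h k' * M.d b))
              (x h' k' * M.d b'))⁻¹) : H × K × G))
    ↔
    -- (ii): the cocycle interchange formula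
    (∀ (h h' : H) (k k' : K),
      g₂ (h * h') k k' * M.act (g₁ h h' k) (x (h * h') k') * g₁ h h' k' =
        g₁ h h' (k * k') * M.act (g₂ h k k') (x h' (k * k')) * g₂ h' k k'
          * (M.act (M.brk (x h' k) (x h k')) (x h' k'))⁻¹) :=
  biextension_interchange_iff_cocycle_interchange_general M g₁ g₂ x hx₁ hx₂
end

section
/- Let C, D, C', D' be monoidal categories and E a braided monoidal category. Let F : C × D ⥤ E be a functor equipped with natural morphisms λ¹_{x,x',y} : F(x,y) ⊗ F(x',y) → F(x⊗x', y) and λ²_{x,y,y'} : F(x,y) ⊗ F(x,y') → F(x, y⊗y') satisfying the bimonoidal compatibility condition. Let G : C' ⥤ C and H : D' ⥤ D be lax monoidal functors with structure morphisms μ_{u,u'} : G(u)⊗G(u') → G(u⊗u') and ν_{v,v'} : H(v)⊗H(v') → H(v⊗v'). Then the composite functor F∘(G×H) : C'×D' ⥤ E, equipped with the structure morphisms λ̃¹_{u,u',v} := λ¹_{G(u),G(u'),H(v)} ≫ F(μ_{u,u'} , 1_{H(v)}) and λ̃²_{u,v,v'} := λ²_{G(u),H(v),H(v')} ≫ F(1_{G(u)},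 ν_{v,v'}), again satisfies the bimonoidal compatibility condition. -/
open CategoryTheory MonoidalCategory CategoryTheory.Functor.LaxMonoidal

section

variable {C D E : Type*} [Category C] [Category D] [Category E]
  [MonoidalCategory C] [MonoidalCategory D] [MonoidalCategory E] [BraidedCategory E]

/-- The braided middle-four interchange
`ĉ_{P,Q,R,S} : (P⊗Q)⊗(R⊗S) ⟶ (P⊗R)⊗(Q⊗S)`. -/
def braidedInterchange (P Q R S : E) : (P ⊗ Q) ⊗ (R ⊗ S) ⟶ (P ⊗ R) ⊗ (Q ⊗ S) :=
  (α_ P Q (R ⊗ S)).hom ≫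
    (P ◁ ((α_ Q R S).inv ≫ ((β_ Q R).hom ▷ S) ≫ (α_ R Q S).hom)) ≫
      (α_ P R (Q ⊗ S)).inv

/-- The bimonoidal compatibility condition for a bifunctor `F : C × D ⥤ E`
equipped with partial monoidal structure morphisms `λ¹, λ²`: for all objects
`x, x'` of `C` and `y, y'` of `D`,
`ĉ ≫ (λ²_{x,y,y'} ⊗ λ²_{x',y,y'}) ≫ λ¹_{x,x',y⊗y'}
  = (λ¹_{x,x',y} ⊗ λ¹_{x,x',y'}) ≫ λ²_{x⊗x',y,y'}`. -/
def BimonoidalCompat (F : C × D ⥤ E)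
    (l1 : ∀ (x x' : C) (y : D), F.obj (x, y) ⊗ F.obj (x', y) ⟶ F.obj (x ⊗ x', y))
    (l2 : ∀ (x : C) (y y' : D), F.obj (x, y) ⊗ F.obj (x, y') ⟶ F.obj (x, y ⊗ y')) :
    Prop :=
  ∀ (x x' : C) (y y' : D),
    braidedInterchange (F.obj (x, y)) (F.obj (x', y)) (F.obj (x, y')) (F.obj (x', y')) ≫
        (l2 x y y' ⊗ₘ l2 x' y y') ≫ l1 x x' (y ⊗ y') =
      (l1 x x' y ⊗ₘ l1 x x' y') ≫ l2 (x ⊗ x') y y'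

end

/-!
Both sides of the compatibility condition for the twisted structure maps
`λ¹ ≫ F(μ, 1)` and `λ² ≫ F(1, ν)` reduce to `(λ¹ ⊗ λ¹) ≫ λ² ≫ F(μ, ν)`: on the left,
naturality of `λ¹` moves `F(1, ν) ⊗ F(1, ν)` past `λ¹`, after which the compatibility of
`F` applies; on the right, naturality of `λ²` moves `F(μ, 1) ⊗ F(μ, 1)` past `λ²`.
-/

section

variable {C D E : Type*} [Category C] [Category D] [Category E]
  [MonoidalCategory C] [MonoidalCategory D] [MonoidalCategory E]
  {F : C × D ⥤ E}
  {l1 : ∀ (x x' : C) (y : D), F.obj (x, y) ⊗ F.obj (x', y) ⟶ F.obj (x ⊗ x', y)}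
  {l2 : ∀ (x : C) (y y' : D), F.obj (x, y) ⊗ F.obj (x, y') ⟶ F.obj (x, y ⊗ y')}

theorem tensorHom_l1_map_comp_l2_map
    (hl2nat : ∀ {x x₁ : C} {y y₁ y' y₁' : D} (f : x ⟶ x₁) (g : y ⟶ y₁) (g' : y' ⟶ y₁'),
      (F.map ((f, g) : (x, y) ⟶ (x₁, y₁)) ⊗ₘ F.map ((f, g') : (x, y') ⟶ (x₁, y₁'))) ≫
          l2 x₁ y₁ y₁' =
        l2 x y y' ≫ F.map ((f, g ⊗ₘ g') : (x, y ⊗ y') ⟶ (x₁, y₁ ⊗ y₁')))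
    {x x' x₁ : C} {y y' y₁ : D} (f : x ⊗ x' ⟶ x₁) (g : y ⊗ y' ⟶ y₁) :
    ((l1 x x' y ≫ F.map ((f, 𝟙 y) : (x ⊗ x', y) ⟶ (x₁, y))) ⊗ₘ
        (l1 x x' y' ≫ F.map ((f, 𝟙 y') : (x ⊗ x', y') ⟶ (x₁, y')))) ≫
        l2 x₁ y y' ≫ F.map ((𝟙 x₁, g) : (x₁, y ⊗ y') ⟶ (x₁, y₁)) =
      (l1 x x' y ⊗ₘ l1 x x' y') ≫ l2 (x ⊗ x') y y' ≫
        F.map ((f, g) : (x ⊗ x', y ⊗ y') ⟶ (x₁, y₁)) := by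
  rw [← tensorHom_comp_tensorHom, Category.assoc, reassoc_of% hl2nat, ← F.map_comp]
  simp only [prod_comp, id_tensorHom_id, Category.id_comp, Category.comp_id]

variable [BraidedCategory E]

theorem BimonoidalCompat.braidedInterchange_comp_tensorHom_l2_map_comp_l1_map
    (hl1nat : ∀ {x x₁ x' x₁' : C} {y y₁ : D} (f : x ⟶ x₁) (f' : x' ⟶ x₁') (g : y ⟶ y₁),
      (F.map ((f, g) : (x, y) ⟶ (x₁, y₁)) ⊗ₘ F.map ((f', g) : (x', y) ⟶ (x₁', y₁))) ≫
          l1 x₁ x₁' y₁ =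
        l1 x x' y ≫ F.map ((f ⊗ₘ f', g) : (x ⊗ x', y) ⟶ (x₁ ⊗ x₁', y₁)))
    (hF : BimonoidalCompat F l1 l2) {x x' x₁ : C} {y y' y₁ : D}
    (f : x ⊗ x' ⟶ x₁) (g : y ⊗ y' ⟶ y₁) :
    braidedInterchange (F.obj (x, y)) (F.obj (x', y)) (F.obj (x, y')) (F.obj (x', y')) ≫
        ((l2 x y y' ≫ F.map ((𝟙 x, g) : (x, y ⊗ y') ⟶ (x, y₁))) ⊗ₘ
          (l2 x' y y' ≫ F.map ((𝟙 x', g) : (x', y ⊗ y') ⟶ (x', y₁)))) ≫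
        l1 x x' y₁ ≫ F.map ((f, 𝟙 y₁) : (x ⊗ x', y₁) ⟶ (x₁, y₁)) =
      (l1 x x' y ⊗ₘ l1 x x' y') ≫ l2 (x ⊗ x') y y' ≫
        F.map ((f, g) : (x ⊗ x', y ⊗ y') ⟶ (x₁, y₁)) := by
  rw [← tensorHom_comp_tensorHom, Category.assoc, reassoc_of% hl1nat, ← reassoc_of% hF,
    ← F.map_comp]
  simp only [prod_comp, id_tensorHom_id, Category.id_comp, Category.comp_id]

end

theorem bimonoidalCompat_comp_laxMonoidal
    {C D C' D' E : Type*} [Category C] [Category D] [Category C'] [Category D']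
    [Category E] [MonoidalCategory C] [MonoidalCategory D] [MonoidalCategory C']
    [MonoidalCategory D'] [MonoidalCategory E] [BraidedCategory E]
    (F : C × D ⥤ E)
    (l1 : ∀ (x x' : C) (y : D), F.obj (x, y) ⊗ F.obj (x', y) ⟶ F.obj (x ⊗ x', y))
    (l2 : ∀ (x : C) (y y' : D), F.obj (x, y) ⊗ F.obj (x, y') ⟶ F.obj (x, y ⊗ y'))
    -- naturality of `λ¹` in each variable
    (hl1nat : ∀ {x x₁ x' x₁' : C} {y y₁ : D} (f : x ⟶ x₁) (f' : x' ⟶ x₁') (g : y ⟶ y₁),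
      (F.map ((f, g) : (x, y) ⟶ (x₁, y₁)) ⊗ₘ F.map ((f', g) : (x', y) ⟶ (x₁', y₁))) ≫
          l1 x₁ x₁' y₁ =
        l1 x x' y ≫ F.map ((f ⊗ₘ f', g) : (x ⊗ x', y) ⟶ (x₁ ⊗ x₁', y₁)))
    -- naturality of `λ²` in each variable
    (hl2nat : ∀ {x x₁ : C} {y y₁ y' y₁' : D} (f : x ⟶ x₁) (g : y ⟶ y₁) (g' : y' ⟶ y₁'),
      (F.map ((f, g) : (x, y) ⟶ (x₁, y₁)) ⊗ₘ F.map ((f, g') : (x, y') ⟶ (x₁, y₁'))) ≫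
          l2 x₁ y₁ y₁' =
        l2 x y y' ≫ F.map ((f, g ⊗ₘ g') : (x, y ⊗ y') ⟶ (x₁, y₁ ⊗ y₁')))
    (hF : BimonoidalCompat F l1 l2)
    (G : C' ⥤ C) [G.LaxMonoidal] (H : D' ⥤ D) [H.LaxMonoidal] :
    BimonoidalCompat (G.prod H ⋙ F)
      (fun u u' v =>
        l1 (G.obj u) (G.obj u') (H.obj v) ≫
          F.map ((μ G u u', 𝟙 (H.obj v)) :
            ((G.obj u ⊗ G.obj u', H.obj v) : C × D) ⟶ (G.obj (u ⊗ u'), H.obj v)))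
      (fun u v v' =>
        l2 (G.obj u) (H.obj v) (H.obj v') ≫
          F.map ((𝟙 (G.obj u), μ H v v') :
            ((G.obj u, H.obj v ⊗ H.obj v') : C × D) ⟶ (G.obj u, H.obj (v ⊗ v')))) := by
  intro u u' v v'
  exact (hF.braidedInterchange_comp_tensorHom_l2_map_comp_l1_map hl1nat (μ G u u') (μ H v v')).trans
    (tensorHom_l1_map_comp_l2_map hl2nat (μ G u u') (μ H v v')).symm
end

section
/- Let D and E be braided monoidal categories and F : D ⥤ E a braided lax monoidal functor, with structure morphisms μ_{d,d'} : F(d)⊗F(d') → F(d⊗d') satisfying the lax monoidal coherence with the associators and the braided compatibility μ_{d,d'} ≫ F(β_{d,d'}) = β_{F(d),F(d')} ≫ μ_{d',d}. Let C₁ and C₂ be monoidal categories and G : C₁ × C₂ ⥤ D a functor equipped with natural morphisms λ¹, λ² satisfying the bimonoidal compatibility condition in D. Then the composite F∘G : C₁×C₂ ⥤ E, equipped with the structure morphisms μ_{G(x,y),G(x',y)} ≫ F(λ¹_{x,x',y}) and μ_{G(x,y),G(x,y')} ≫ F(λ²_{x,y,y'}), satisfies the bimonoidal compatibility condition in E.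 -/
/-!
A braided lax monoidal functor intertwines the middle-four interchanges of its source and target
through `μ` (`tensorμ_comp_μ_tensorHom_μ_comp_μ`), and `μ` is natural. Hence both sides of the
compatibility square for `F ∘ G` factor as `(μ ⊗ μ) ≫ μ ≫ F.map _`, applied to the two sides of
the square for `G`.
-/

open CategoryTheory MonoidalCategory CategoryTheory.Functor.LaxMonoidal

section

variable {D E : Type*} [Category D] [Category E] [MonoidalCategory D] [MonoidalCategory E]

lemma braidedInterchange_eq_tensorμ [BraidedCategory E] (P Q R S : E) :
    braidedInterchange P Q R S = tensorμ P Q R S := by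
  simp [braidedInterchange, tensorμ]

variable (F : D ⥤ E)

lemma tensorHom_μ_map_comp_μ_map [F.LaxMonoidal] {P Q R S X Y Z : D}
    (f : P ⊗ R ⟶ X) (g : Q ⊗ S ⟶ Y) (h : X ⊗ Y ⟶ Z) :
    ((μ F P R ≫ F.map f) ⊗ₘ (μ F Q S ≫ F.map g)) ≫ μ F X Y ≫ F.map h =
      (μ F P R ⊗ₘ μ F Q S) ≫ μ F (P ⊗ R) (Q ⊗ S) ≫ F.map ((f ⊗ₘ g) ≫ h) := by
  simp only [← tensorHom_comp_tensorHom, Category.assoc, μ_natural_assoc, F.map_comp]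

lemma braidedInterchange_comp_tensorHom_μ_map_comp_μ_map [BraidedCategory D] [BraidedCategory E]
    [F.LaxBraided] {P Q R S X Y Z : D} (f : P ⊗ R ⟶ X) (g : Q ⊗ S ⟶ Y) (h : X ⊗ Y ⟶ Z) :
    braidedInterchange (F.obj P) (F.obj Q) (F.obj R) (F.obj S) ≫
        ((μ F P R ≫ F.map f) ⊗ₘ (μ F Q S ≫ F.map g)) ≫ μ F X Y ≫ F.map h =
      (μ F P Q ⊗ₘ μ F R S) ≫ μ F (P ⊗ Q) (R ⊗ S) ≫
        F.map (braidedInterchange P Q R S ≫ (f ⊗ₘ g) ≫ h) := by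
  rw [tensorHom_μ_map_comp_μ_map, braidedInterchange_eq_tensorμ, braidedInterchange_eq_tensorμ,
    tensorμ_comp_μ_tensorHom_μ_comp_μ_assoc, ← F.map_comp]

end

theorem bimonoidalCompat_comp_laxBraided_general
    {C₁ C₂ D E : Type*} [Category C₁] [Category C₂] [Category D] [Category E]
    [MonoidalCategory C₁] [MonoidalCategory C₂] [MonoidalCategory D]
    [MonoidalCategory E] [BraidedCategory D] [BraidedCategory E]
    (F : D ⥤ E) [F.LaxBraided]
    (G : C₁ × C₂ ⥤ D)
    (l1 : ∀ (x x' : C₁) (y : C₂), G.obj (x, y) ⊗ G.obj (x', y) ⟶ G.obj (x ⊗ x', y))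
    (l2 : ∀ (x : C₁) (y y' : C₂), G.obj (x, y) ⊗ G.obj (x, y') ⟶ G.obj (x, y ⊗ y'))
    (hG : BimonoidalCompat G l1 l2) :
    BimonoidalCompat (G ⋙ F)
      (fun x x' y => μ F (G.obj (x, y)) (G.obj (x', y)) ≫ F.map (l1 x x' y))
      (fun x y y' => μ F (G.obj (x, y)) (G.obj (x, y')) ≫ F.map (l2 x y y')) := by
  intro x x' y y'
  dsimp only [Functor.comp_obj]
  rw [braidedInterchange_comp_tensorHom_μ_map_comp_μ_map, hG x x' y y',
    tensorHom_μ_map_comp_μ_map]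

theorem bimonoidalCompat_comp_laxBraided
    {C₁ C₂ D E : Type*} [Category C₁] [Category C₂] [Category D] [Category E]
    [MonoidalCategory C₁] [MonoidalCategory C₂] [MonoidalCategory D]
    [MonoidalCategory E] [BraidedCategory D] [BraidedCategory E]
    (F : D ⥤ E) [F.LaxBraided]
    (G : C₁ × C₂ ⥤ D)
    (l1 : ∀ (x x' : C₁) (y : C₂), G.obj (x, y) ⊗ G.obj (x', y) ⟶ G.obj (x ⊗ x', y))
    (l2 : ∀ (x : C₁) (y y' : C₂), G.obj (x, y) ⊗ G.obj (x, y') ⟶ G.obj (x, y ⊗ y'))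
    -- naturality of `λ¹` in each variable
    (hl1nat : ∀ {x x₁ x' x₁' : C₁} {y y₁ : C₂} (f : x ⟶ x₁) (f' : x' ⟶ x₁') (g : y ⟶ y₁),
      (G.map ((f, g) : (x, y) ⟶ (x₁, y₁)) ⊗ₘ G.map ((f', g) : (x', y) ⟶ (x₁', y₁))) ≫
          l1 x₁ x₁' y₁ =
        l1 x x' y ≫ G.map ((f ⊗ₘ f', g) : (x ⊗ x', y) ⟶ (x₁ ⊗ x₁', y₁)))
    -- naturality of `λ²` in each variable
    (hl2nat : ∀ {x x₁ : C₁} {y y₁ y' y₁' : C₂} (f : x ⟶ x₁) (g : y ⟶ y₁) (g' : y' ⟶ y₁'),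
      (G.map ((f, g) : (x, y) ⟶ (x₁, y₁)) ⊗ₘ G.map ((f, g') : (x, y') ⟶ (x₁, y₁'))) ≫
          l2 x₁ y₁ y₁' =
        l2 x y y' ≫ G.map ((f, g ⊗ₘ g') : (x, y ⊗ y') ⟶ (x₁, y₁ ⊗ y₁')))
    (hG : BimonoidalCompat G l1 l2) :
    BimonoidalCompat (G ⋙ F)
      (fun x x' y => μ F (G.obj (x, y)) (G.obj (x', y)) ≫ F.map (l1 x x' y))
      (fun x y y' => μ F (G.obj (x, y)) (G.obj (x, y')) ≫ F.map (l2 x y y')) :=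
  bimonoidalCompat_comp_laxBraided_general F G l1 l2 hG
end
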